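/- arXiv:1906.07919 — 5 statements merged into one kernel-verified Lean document; each statement's English description precedes it below -/
import Mathlib

section
/- Given n ≥ 3 pairwise distinct positive real numbers r_1, ..., r_n, there exist points v_1, ..., v_n in the plane with ‖v_i‖ = r_i for each i such that every v_i is an extreme point of the convex hull of {v_1, ..., v_n} and the origin lies in the interior of this convex hull. -/
/-!
Put every point on one circle `C` centred at `q = (d, 0)` with radius `√(d² + P)`. A point of `C`
at distance `ρ` from the origin has abscissa `(ρ² - P) / (2d)`, so once `d` is large every radius
`r l` is realised by a point of `C`, above or below the x-axis as we like; points of a circle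
are in convex position because the Euclidean norm is strictly convex. Let `a < b < c` be the least,
some intermediate and the largest radius. With `P = (a² + b²) / 2` the points of radii `a` and `b`
get opposite abscissae `-ξ < 0 < ξ`, and the point of radius `c` has positive abscissa. Putting the
point of radius `b` below the axis and all others above it, the origin lies strictly inside the
triangle of these three points: all three `2 × 2` determinants of consecutive vertices are positive.
-/

open Set Metric

theorem ConvexIndependent.of_mem_sphere {ι E : Type*} [NormedAddCommGroup E] [NormedSpace ℝ E]
    [StrictConvexSpace ℝ E] {p : ι → E} (hp : Function.Injective p) {c : E} {R : ℝ} (hR : R ≠ 0)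
    (hmem : ∀ i, p i ∈ sphere c R) : ConvexIndependent ℝ p := by
  let f : ι ↪ extremePoints ℝ (closedBall c R) :=
    ⟨fun i ↦ ⟨p i, StrictConvexSpace.sphere_subset_extremePoints_closedBall c hR (hmem i)⟩,
      fun i j h ↦ hp (congrArg Subtype.val h)⟩
  exact (convex_closedBall c R).convexIndependent_extremePoints.comp_embedding f

theorem AffineBasis.sum_smul_mem_interior_convexHull {ι E : Type*} [Fintype ι]
    [NormedAddCommGroup E] [NormedSpace ℝ E] (b : AffineBasis ι ℝ E) {w : ι → ℝ}
    (hw : ∀ i, 0 < w i) (hsum : ∑ i, w i = 1) :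
    ∑ i, w i • b i ∈ interior (convexHull ℝ (range b)) := by
  rw [b.interior_convexHull]
  intro i
  rw [← Finset.univ.affineCombination_eq_linear_combination _ _ hsum,
    b.coord_apply_combination_of_mem (Finset.mem_univ i) hsum]
  exact hw i

def wedge (u v : EuclideanSpace ℝ (Fin 2)) : ℝ := u 0 * v 1 - u 1 * v 0

section Triangle

variable {p : Fin 3 → EuclideanSpace ℝ (Fin 2)}

theorem sum_wedge_smul_eq_zero :
    ∑ i, ![wedge (p 1) (p 2), wedge (p 2) (p 0), wedge (p 0) (p 1)] i • p i = 0 := by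
  ext k
  fin_cases k <;>
    simp only [Fin.sum_univ_three, wedge, Matrix.cons_val, PiLp.add_apply, PiLp.smul_apply,
      smul_eq_mul, PiLp.zero_apply, Fin.zero_eta, Fin.mk_one] <;> ring

theorem affineIndependent_of_sum_wedge_ne_zero
    (h : wedge (p 1) (p 2) + wedge (p 2) (p 0) + wedge (p 0) (p 1) ≠ 0) :
    AffineIndependent ℝ p := by
  rw [affineIndependent_iff_of_fintype]
  intro μ hμ hμp
  rw [Finset.weightedVSub_eq_linear_combination _ hμ] at hμp
  have h0 := congrArg (· 0) hμp
  have h1 := congrArg (· 1) hμp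
  simp only [Fin.sum_univ_three] at hμ h0 h1
  simp only [PiLp.add_apply, PiLp.smul_apply, smul_eq_mul, PiLp.zero_apply] at h0 h1
  -- Cramer's rule for the system `∑ μ = 0`, `∑ μ • p = 0`.
  have hT : ∀ i, μ i * (wedge (p 1) (p 2) + wedge (p 2) (p 0) + wedge (p 0) (p 1)) = 0 := by
    intro i
    fin_cases i <;> simp only [wedge, Fin.zero_eta, Fin.mk_one, Fin.reduceFinMk]
    · linear_combination (p 1 0 * p 2 1 - p 1 1 * p 2 0) * hμ + (p 1 1 - p 2 1) * h0
        + (p 2 0 - p 1 0) * h1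
    · linear_combination (p 2 0 * p 0 1 - p 2 1 * p 0 0) * hμ + (p 2 1 - p 0 1) * h0
        + (p 0 0 - p 2 0) * h1
    · linear_combination (p 0 0 * p 1 1 - p 0 1 * p 1 0) * hμ + (p 0 1 - p 1 1) * h0
        + (p 1 0 - p 0 0) * h1
  exact fun i ↦ (mul_eq_zero.1 (hT i)).resolve_right h

theorem zero_mem_interior_convexHull_of_wedge_pos (h₀ : 0 < wedge (p 1) (p 2))
    (h₁ : 0 < wedge (p 2) (p 0)) (h₂ : 0 < wedge (p 0) (p 1)) :
    (0 : EuclideanSpace ℝ (Fin 2)) ∈ interior (convexHull ℝ (range p)) := by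
  set w := ![wedge (p 1) (p 2), wedge (p 2) (p 0), wedge (p 0) (p 1)]
  have hT : 0 < ∑ i, w i := by simp only [w, Fin.sum_univ_three, Matrix.cons_val]; linarith
  have hind : AffineIndependent ℝ p :=
    affineIndependent_of_sum_wedge_ne_zero (by simpa [w, Fin.sum_univ_three] using hT.ne')
  let b : AffineBasis (Fin 3) ℝ (EuclideanSpace ℝ (Fin 2)) :=
    ⟨p, hind, hind.affineSpan_eq_top_iff_card_eq_finrank_add_one.2 (by simp)⟩
  have hw : ∀ i, 0 < w i / ∑ j, w j := fun i ↦ by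
    fin_cases i <;> simp only [w] <;> positivity
  have h0 : ∑ i, (w i / ∑ j, w j) • b i = 0 := by
    simp only [div_eq_inv_mul, mul_smul, ← Finset.smul_sum]
    rw [show ∑ i, w i • b i = 0 from sum_wedge_smul_eq_zero, smul_zero]
  rw [← h0]
  exact b.sum_smul_mem_interior_convexHull hw (by rw [← Finset.sum_div, div_self hT.ne'])

end Triangle

noncomputable def pointOnCircle (ξ r s : ℝ) : EuclideanSpace ℝ (Fin 2) := !₂[ξ, s * √(r ^ 2 - ξ ^ 2)]

section PointOnCircle

variable {ξ r s : ℝ}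

@[simp] theorem pointOnCircle_zero : pointOnCircle ξ r s 0 = ξ := by simp [pointOnCircle]

@[simp] theorem pointOnCircle_one : pointOnCircle ξ r s 1 = s * √(r ^ 2 - ξ ^ 2) := by
  simp [pointOnCircle]

theorem pointOnCircle_mem_sphere (hξ : |ξ| ≤ r) (hs : s ^ 2 = 1) {d P : ℝ}
    (h : 2 * d * ξ = r ^ 2 - P) : pointOnCircle ξ r s ∈ sphere !₂[d, 0] √(d ^ 2 + P) := by
  have hr : 0 ≤ r ^ 2 - ξ ^ 2 := by nlinarith [abs_nonneg ξ, sq_abs ξ]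
  rw [mem_sphere, EuclideanSpace.dist_eq, Fin.sum_univ_two]
  congr 1
  simp only [pointOnCircle_zero, pointOnCircle_one, Real.dist_eq, sq_abs, Matrix.cons_val_zero,
    Matrix.cons_val_one, Matrix.cons_val_fin_one, sub_zero, mul_pow, hs, one_mul, Real.sq_sqrt hr]
  linear_combination -h

theorem norm_pointOnCircle (hξ : |ξ| ≤ r) (hs : s ^ 2 = 1) : ‖pointOnCircle ξ r s‖ = r := by
  have hr : 0 ≤ r := (abs_nonneg ξ).trans hξ
  have h := pointOnCircle_mem_sphere hξ hs (d := 0) (P := r ^ 2) (by ring)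
  have h0 : (!₂[0, 0] : EuclideanSpace ℝ (Fin 2)) = 0 := by ext i; fin_cases i <;> rfl
  rwa [h0, mem_sphere_zero_iff_norm, zero_pow two_ne_zero, zero_add, Real.sqrt_sq hr] at h

theorem wedge_pointOnCircle {ξ' r' s' : ℝ} :
    wedge (pointOnCircle ξ r s) (pointOnCircle ξ' r' s') =
      ξ * (s' * √(r' ^ 2 - ξ' ^ 2)) - s * √(r ^ 2 - ξ ^ 2) * ξ' := by
  simp [wedge]

theorem zero_mem_interior_convexHull_pointOnCircle {η a b c : ℝ} (hξ : 0 < ξ) (hξb : ξ < b)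
    (hab : a ^ 2 < b ^ 2) (hη : 0 < η) (hηc : η < c) :
    (0 : EuclideanSpace ℝ (Fin 2)) ∈ interior (convexHull ℝ
      {pointOnCircle (-ξ) a 1, pointOnCircle ξ b (-1), pointOnCircle η c 1}) := by
  have ha : 0 ≤ √(a ^ 2 - ξ ^ 2) := Real.sqrt_nonneg _
  have hb : √(a ^ 2 - ξ ^ 2) < √(b ^ 2 - ξ ^ 2) :=
    (Real.sqrt_lt_sqrt_iff_of_pos (by nlinarith)).2 (by linarith)
  have hc : 0 < √(c ^ 2 - η ^ 2) := Real.sqrt_pos.2 (by nlinarith)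
  have h := zero_mem_interior_convexHull_of_wedge_pos
    (p := ![pointOnCircle (-ξ) a 1, pointOnCircle ξ b (-1), pointOnCircle η c 1])
    (by simp only [Matrix.cons_val, wedge_pointOnCircle]; nlinarith [mul_pos hη (ha.trans_lt hb)])
    (by simp only [Matrix.cons_val, wedge_pointOnCircle, neg_sq]; nlinarith [mul_nonneg hη.le ha])
    (by simp only [Matrix.cons_val, wedge_pointOnCircle, neg_sq]; nlinarith)
  rwa [Matrix.range_cons, Matrix.range_cons_cons_empty, Set.singleton_union] at h

end PointOnCircle

theorem Function.Injective.exists_min_lt_lt_max {ι α : Type*} [Fintype ι] [LinearOrder α]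
    {f : ι → α} (hf : Function.Injective f) (hι : 3 ≤ Fintype.card ι) :
    ∃ i j k, f i < f j ∧ f j < f k ∧ ∀ l, f i ≤ f l ∧ f l ≤ f k := by
  classical
  have : Nonempty ι := Fintype.card_pos_iff.1 (by omega)
  obtain ⟨i, hi⟩ := Finite.exists_min f
  obtain ⟨k, hk⟩ := Finite.exists_max f
  obtain ⟨j, hj⟩ : ∃ j, j ∉ ({i, k} : Finset ι) := by
    by_contra! h
    have := (Finset.card_le_card (fun j _ ↦ h j : Finset.univ ⊆ {i, k})).trans Finset.card_le_two
    rw [Finset.card_univ] at this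
    omega
  simp only [Finset.mem_insert, Finset.mem_singleton, not_or] at hj
  exact ⟨i, j, k, (hi j).lt_of_ne (hf.ne (Ne.symm hj.1)), (hk j).lt_of_ne (hf.ne hj.2),
    fun l ↦ ⟨hi l, hk l⟩⟩

theorem abs_sq_sub_div_lt {a M P ρ : ℝ} (ha : 0 < a) (hP : 0 < P) (haρ : a ≤ ρ) (hρM : ρ ≤ M) :
    |(ρ ^ 2 - P) / (2 * (M + P / a))| < ρ := by
  have hPa : (M + P / a) * a = M * a + P := by field_simp
  have hMd : M ≤ M + P / a := le_add_of_nonneg_right (by positivity)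
  have hd : 0 < M + P / a := by nlinarith
  rw [abs_lt, lt_div_iff₀ (by positivity), div_lt_iff₀ (by positivity)]
  constructor
  · nlinarith [mul_le_mul_of_nonneg_left haρ hd.le]
  · nlinarith [mul_le_mul_of_nonneg_left (hρM.trans hMd) (ha.trans_le haρ).le]

theorem stmt0 (n : ℕ) (hn : 3 ≤ n) (r : Fin n → ℝ)
    (hpos : ∀ i, 0 < r i) (hdist : Function.Injective r) :
    ∃ v : Fin n → EuclideanSpace ℝ (Fin 2),
      (∀ i, ‖v i‖ = r i) ∧
      (∀ i, v i ∉ convexHull ℝ (v '' {j | j ≠ i})) ∧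
      (0 : EuclideanSpace ℝ (Fin 2)) ∈ interior (convexHull ℝ (Set.range v)) := by
  obtain ⟨i, j, k, hij, hjk, hbounds⟩ := hdist.exists_min_lt_lt_max (by simpa using hn)
  have ha := hpos i
  set P := (r i ^ 2 + r j ^ 2) / 2 with hP
  set d := r k + P / r i
  have hd : 0 < d := by have := hpos k; positivity
  set x := fun l ↦ (r l ^ 2 - P) / (2 * d)
  have h2dx : ∀ l, 2 * d * x l = r l ^ 2 - P := fun l ↦ mul_div_cancel₀ _ (by positivity)
  have hxr : ∀ l, |x l| < r l := fun l ↦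
    abs_sq_sub_div_lt ha (by positivity) (hbounds l).1 (hbounds l).2
  set σ := fun l ↦ if l = j then (-1 : ℝ) else 1
  have hσ : ∀ l, σ l ^ 2 = 1 := fun l ↦ by by_cases h : l = j <;> simp [σ, h]
  set v := fun l ↦ pointOnCircle (x l) (r l) (σ l)
  have hnorm : ∀ l, ‖v l‖ = r l := fun l ↦ norm_pointOnCircle (hxr l).le (hσ l)
  have hinj : Function.Injective v := fun l l' h ↦ hdist (by rw [← hnorm, h, hnorm])
  refine ⟨v, hnorm, fun l ↦ ?_, ?_⟩
  · have hconv := ConvexIndependent.of_mem_sphere hinj (by positivity)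
      fun l ↦ pointOnCircle_mem_sphere (hxr l).le (hσ l) (h2dx l)
    rw [hconv.mem_convexHull_iff]
    exact fun h ↦ h rfl
  · have hxij : x i = -x j :=
      mul_left_cancel₀ (by positivity : 2 * d ≠ 0) (by linarith [h2dx i, h2dx j])
    have hxj : 0 < x j := pos_of_mul_pos_right (by nlinarith [h2dx j]) (by positivity : 0 ≤ 2 * d)
    have hxk : 0 < x k := pos_of_mul_pos_right (by nlinarith [h2dx k]) (by positivity : 0 ≤ 2 * d)
    refine interior_mono (convexHull_mono ?_) (zero_mem_interior_convexHull_pointOnCircle hxj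
      (lt_of_abs_lt (hxr j)) (pow_lt_pow_left₀ hij ha.le two_ne_zero) hxk (lt_of_abs_lt (hxr k)))
    rintro _ (rfl | rfl | rfl)
    · exact ⟨i, by simp [v, σ, hxij, ne_of_apply_ne r hij.ne]⟩
    · exact ⟨j, by simp [v, σ]⟩
    · exact ⟨k, by simp [v, σ, ne_of_apply_ne r hjk.ne']⟩
end

section
/- Given n ≥ 3 pairwise distinct positive real numbers r_1, ..., r_n, there exist points v_1, ..., v_n in the plane with ‖v_i‖ = r_i for each i such that each v_i lies on the boundary of the convex hull of {v_1, ..., v_n} and the origin lies in the interior of that convex hull. -/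
/-!
Let `r a` be the smallest radius and `b ≠ k` two further indices. All points but `v k` go on the
line `y = -r a`, at `(√(r i ^ 2 - r a ^ 2), -r a)`; they lie on the boundary because the hull stays
in the half-plane `y ≥ -r a`. The point `v k` goes on the ray opposite to `v a + v b`, so it
maximises `⟪-(v a + v b), ·⟫` over all points, and the origin is a positive combination of
`v a, v b, v k`. Since `r a < r b` these span the plane, so the open map `t ↦ ∑ tᵢ • pᵢ` carries
the open set `{t | 0 < tᵢ, ∑ tᵢ < 1}`, which lies over the hull, onto a neighbourhood of the origin.
-/

open Set

theorem mem_frontier_convexHull_of_inner_le {E : Type*} [NormedAddCommGroup E]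
    [InnerProductSpace ℝ E] {s : Set E} {x u : E} (hx : x ∈ s) (hu : u ≠ 0)
    (hmax : ∀ y ∈ s, inner ℝ u y ≤ inner ℝ u x) : x ∈ frontier (convexHull ℝ s) := by
  refine ⟨subset_closure (subset_convexHull ℝ s hx), fun hint => ?_⟩
  have hhull : convexHull ℝ s ⊆ {y | inner ℝ u y ≤ inner ℝ u x} :=
    convexHull_min hmax (convex_halfSpace_le (innerₛₗ ℝ u).isLinear _)
  obtain ⟨ε, hε, hball⟩ := Metric.mem_nhds_iff.mp (mem_interior_iff_mem_nhds.mp hint)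
  have hu' : 0 < ‖u‖ := norm_pos_iff.mpr hu
  have hpush : x + (ε / (2 * ‖u‖)) • u ∈ convexHull ℝ s := hball <| by
    rw [Metric.mem_ball, dist_self_add_left, norm_smul, Real.norm_of_nonneg (by positivity)]
    field_simp
    linarith
  have hpush_le := hhull hpush
  simp only [mem_ofPred_eq, inner_add_right, inner_smul_right, real_inner_self_eq_norm_sq]
    at hpush_le
  have : 0 < ε / (2 * ‖u‖) * ‖u‖ ^ 2 := by positivity
  linarith

theorem zero_mem_interior_convexHull_of_pos_combination {ι E : Type*} [Fintype ι] [Nonempty ι]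
    [NormedAddCommGroup E] [NormedSpace ℝ E] [FiniteDimensional ℝ E] {p : ι → E}
    (hspan : Submodule.span ℝ (range p) = ⊤) {w : ι → ℝ} (hw : ∀ i, 0 < w i)
    (hw0 : ∑ i, w i • p i = 0) : (0 : E) ∈ interior (convexHull ℝ (range p)) := by
  set A := Fintype.linearCombination ℝ p
  have hA : ∀ t, A t = ∑ i, t i • p i := Fintype.linearCombination_apply ℝ p
  have hAopen : IsOpenMap A := A.isOpenMap_of_finiteDimensional
    ((span_range_eq_top_iff_surjective_fintypeLinearCombination ℝ p).mp hspan)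
  have hzero : (0 : E) ∈ convexHull ℝ (range p) := by
    have := Finset.centerMass_mem_convexHull (s := range p) Finset.univ (w := w)
      (fun i _ => (hw i).le) (Finset.sum_pos (fun i _ => hw i) Finset.univ_nonempty)
      (fun i _ => mem_range_self i)
    rwa [Finset.centerMass, hw0, smul_zero] at this
  -- `∑ t i • p i = (∑ t i) • centerMass t p + (1 - ∑ t i) • 0` lies in the hull for `t ∈ U`.
  set U : Set (ι → ℝ) := {t | (∀ i, 0 < t i) ∧ ∑ i, t i < 1}
  have hU : IsOpen U := by
    simp only [U, ofPred_and, ofPred_forall]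
    exact (isOpen_iInter_of_finite fun i => isOpen_lt continuous_const (continuous_apply i)).inter
      (isOpen_lt (continuous_finsetSum _ fun i _ => continuous_apply i) continuous_const)
  have hAU : A '' U ⊆ convexHull ℝ (range p) := by
    rintro _ ⟨t, ⟨htpos, htsum⟩, rfl⟩
    have hpos : 0 < ∑ i, t i := Finset.sum_pos (fun i _ => htpos i) Finset.univ_nonempty
    have hmass := Finset.centerMass_mem_convexHull (s := range p) Finset.univ (w := t)
      (fun i _ => (htpos i).le) hpos (fun i _ => mem_range_self i)
    have := (convex_convexHull ℝ _).smul_mem_of_zero_mem hzero hmass ⟨hpos.le, htsum.le⟩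
    rwa [Finset.centerMass, smul_inv_smul₀ hpos.ne', ← hA] at this
  set c := (∑ i, w i + 1)⁻¹
  have hcw : c • w ∈ U := by
    have hsum : 0 < ∑ i, w i := Finset.sum_pos (fun i _ => hw i) Finset.univ_nonempty
    refine ⟨fun i => mul_pos (by positivity) (hw i), ?_⟩
    simp only [Pi.smul_apply, smul_eq_mul, ← Finset.mul_sum]
    rw [inv_mul_lt_one₀ (by positivity)]
    linarith
  have hAcw : A (c • w) = 0 := by rw [map_smul, hA, hw0, smul_zero]
  rw [mem_interior_iff_mem_nhds]
  exact Filter.mem_of_superset (hAcw ▸ hAopen.image_mem_nhds (hU.mem_nhds hcw)) hAU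

namespace EuclideanSpace

theorem norm_vec2 (x y : ℝ) : ‖!₂[x, y]‖ = √(x ^ 2 + y ^ 2) := by
  simp [EuclideanSpace.norm_eq, Fin.sum_univ_two]

theorem inner_vec2 (a b c d : ℝ) : inner ℝ !₂[a, b] !₂[c, d] = a * c + b * d := by
  simp [Fin.sum_univ_two, PiLp.inner_apply, mul_comm]

theorem span_vec2_pair_eq_top {a b c d : ℝ} (hdet : a * d - b * c ≠ 0) :
    Submodule.span ℝ {!₂[a, b], !₂[c, d]} = ⊤ := by
  refine Submodule.eq_top_iff'.mpr fun z => ?_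
  have hz : z = ((z 0 * d - z 1 * c) / (a * d - b * c)) • !₂[a, b]
      + ((a * z 1 - b * z 0) / (a * d - b * c)) • !₂[c, d] := by
    ext i
    fin_cases i <;>
    · simp only [Fin.zero_eta, Fin.mk_one, PiLp.add_apply, PiLp.smul_apply, smul_eq_mul,
        Matrix.cons_val_zero, Matrix.cons_val_one]
      rw [div_mul_eq_mul_div, div_mul_eq_mul_div, ← add_div, eq_div_iff hdet]
      ring
  rw [hz]
  exact add_mem (Submodule.smul_mem _ _ (Submodule.subset_span (by simp)))
    (Submodule.smul_mem _ _ (Submodule.subset_span (by simp)))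

end EuclideanSpace

noncomputable section

open EuclideanSpace

def lowPoint (h ρ : ℝ) : EuclideanSpace ℝ (Fin 2) := !₂[√(ρ ^ 2 - h ^ 2), -h]

theorem norm_lowPoint {h ρ : ℝ} (hh : 0 ≤ h) (hρ : h ≤ ρ) : ‖lowPoint h ρ‖ = ρ := by
  rw [lowPoint, norm_vec2, Real.sq_sqrt (by nlinarith), neg_sq, sub_add_cancel,
    Real.sqrt_sq (hh.trans hρ)]

theorem inner_lowPoint (p q h ρ : ℝ) :
    inner ℝ !₂[p, q] (lowPoint h ρ) = p * √(ρ ^ 2 - h ^ 2) - q * h := by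
  rw [lowPoint, inner_vec2]
  ring

theorem lowPoint_self (h : ℝ) : lowPoint h h = !₂[0, -h] := by
  simp [lowPoint]

section PlaneConfig

variable {ι : Type*} (r : ι → ℝ) (a b k : ι)

def lowSum : EuclideanSpace ℝ (Fin 2) := lowPoint (r a) (r a) + lowPoint (r a) (r b)

theorem lowSum_eq : lowSum r a b = !₂[√(r b ^ 2 - r a ^ 2), -2 * r a] := by
  rw [lowSum, lowPoint_self, lowPoint]
  ext i
  fin_cases i
  · simp
  · simp; ring

theorem lowSum_ne_zero (ha : r a ≠ 0) : lowSum r a b ≠ 0 := fun h0 => by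
  have := congrArg (· 1) ((lowSum_eq r a b).symm.trans h0)
  simp_all

variable [DecidableEq ι]

def planeConfig : ι → EuclideanSpace ℝ (Fin 2) :=
  Function.update (fun i => lowPoint (r a) (r i)) k (-(r k / ‖lowSum r a b‖) • lowSum r a b)

variable {r a b k}

theorem planeConfig_of_ne {i : ι} (hi : i ≠ k) : planeConfig r a b k i = lowPoint (r a) (r i) :=
  Function.update_of_ne hi _ _

theorem planeConfig_self : planeConfig r a b k k = -(r k / ‖lowSum r a b‖) • lowSum r a b :=
  Function.update_self _ _ _

theorem norm_planeConfig (ha : 0 < r a) (hmin : ∀ i, r a ≤ r i) (i : ι) :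
    ‖planeConfig r a b k i‖ = r i := by
  rcases eq_or_ne i k with rfl | hi
  · rw [planeConfig_self, norm_smul, norm_neg, Real.norm_of_nonneg (by
      have := ha.trans_le (hmin i); positivity)]
    exact div_mul_cancel₀ _ (norm_ne_zero_iff.mpr (lowSum_ne_zero r a b ha.ne'))
  · rw [planeConfig_of_ne hi, norm_lowPoint ha.le (hmin i)]

theorem planeConfig_mem_frontier (ha : 0 < r a) (hmin : ∀ i, r a ≤ r i) (i : ι) :
    planeConfig r a b k i ∈ frontier (convexHull ℝ (range (planeConfig r a b k))) := by
  have hc : 0 ≤ r k / ‖lowSum r a b‖ := by have := ha.trans_le (hmin k); positivity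
  have hapex : ∀ u, inner ℝ u (planeConfig r a b k k) =
      -(r k / ‖lowSum r a b‖) * inner ℝ u (lowSum r a b) := fun u => by
    rw [planeConfig_self, inner_smul_right]
  have hv : ∀ j, planeConfig r a b k j = lowPoint (r a) (r j) ∨
      planeConfig r a b k j = planeConfig r a b k k := fun j => by
    rcases eq_or_ne j k with rfl | hj
    · exact .inr rfl
    · exact .inl (planeConfig_of_ne hj)
  rcases eq_or_ne i k with rfl | hi
  · refine mem_frontier_convexHull_of_inner_le (mem_range_self _)
      (neg_ne_zero.mpr (lowSum_ne_zero r a b ha.ne')) ?_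
    rintro _ ⟨j, rfl⟩
    rcases hv j with hj | hj <;> rw [hj]
    have hlow : inner ℝ (lowSum r a b) (lowPoint (r a) (r j)) =
        √(r b ^ 2 - r a ^ 2) * √(r j ^ 2 - r a ^ 2) + 2 * r a * r a := by
      rw [lowSum_eq, inner_lowPoint]
      ring
    rw [hapex, inner_neg_left, inner_neg_left, hlow, real_inner_self_eq_norm_sq]
    nlinarith [mul_nonneg hc (sq_nonneg ‖lowSum r a b‖),
      mul_nonneg (Real.sqrt_nonneg (r b ^ 2 - r a ^ 2)) (Real.sqrt_nonneg (r j ^ 2 - r a ^ 2))]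
  · refine mem_frontier_convexHull_of_inner_le (mem_range_self _)
      (u := !₂[0, -1]) (by simp) ?_
    rintro _ ⟨j, rfl⟩
    rw [planeConfig_of_ne hi, inner_lowPoint]
    rcases hv j with hj | hj <;> rw [hj]
    · rw [inner_lowPoint]
      norm_num
    · have hlow : inner ℝ !₂[0, -1] (lowSum r a b) = 2 * r a := by
        rw [lowSum_eq, inner_vec2]
        ring
      rw [hapex, hlow]
      nlinarith

theorem zero_mem_interior_convexHull_planeConfig (hka : k ≠ a) (hkb : k ≠ b) (ha : 0 < r a)
    (hab : r a < r b) (hmin : ∀ i, r a ≤ r i) :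
    (0 : EuclideanSpace ℝ (Fin 2)) ∈ interior (convexHull ℝ (range (planeConfig r a b k))) := by
  set c := r k / ‖lowSum r a b‖
  have hc : 0 < c :=
    div_pos (ha.trans_le (hmin k)) (norm_pos_iff.mpr (lowSum_ne_zero r a b ha.ne'))
  have htri : range ![lowPoint (r a) (r a), lowPoint (r a) (r b), -c • lowSum r a b] ⊆
      range (planeConfig r a b k) := by
    rw [range_subset_iff]
    intro i
    fin_cases i
    · exact ⟨a, planeConfig_of_ne hka.symm⟩
    · exact ⟨b, planeConfig_of_ne hkb.symm⟩
    · exact ⟨k, planeConfig_self⟩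
  refine interior_mono (convexHull_mono htri)
    (zero_mem_interior_convexHull_of_pos_combination ?_ (w := ![c, c, 1]) ?_ ?_)
  · have hdet : 0 * -r a - -r a * √(r b ^ 2 - r a ^ 2) ≠ 0 := by
      have : 0 < √(r b ^ 2 - r a ^ 2) := Real.sqrt_pos.mpr (by nlinarith)
      nlinarith
    refine eq_top_mono (Submodule.span_mono ?_) (span_vec2_pair_eq_top hdet)
    rw [← lowPoint_self, show !₂[√(r b ^ 2 - r a ^ 2), -r a] = lowPoint (r a) (r b) from rfl]
    exact insert_subset (mem_range_self 0) (singleton_subset_iff.mpr (mem_range_self 1))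
  · intro i
    fin_cases i <;> simp [hc]
  · simp only [Fin.sum_univ_three, lowSum, Matrix.cons_val_zero, Matrix.cons_val_one,
      Matrix.cons_val_two, Matrix.tail_cons, Matrix.head_cons, one_smul]
    module

end PlaneConfig

end

theorem stmt1 (n : ℕ) (hn : 3 ≤ n) (r : Fin n → ℝ)
    (hpos : ∀ i, 0 < r i) (hdist : Function.Injective r) :
    ∃ v : Fin n → EuclideanSpace ℝ (Fin 2),
      (∀ i, ‖v i‖ = r i) ∧
      (∀ i, v i ∈ frontier (convexHull ℝ (Set.range v))) ∧
      (0 : EuclideanSpace ℝ (Fin 2)) ∈ interior (convexHull ℝ (Set.range v)) := by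
  obtain ⟨a, -, hmin⟩ := Finset.univ.exists_min_image r ⟨⟨0, by omega⟩, Finset.mem_univ _⟩
  have hcard : 1 < (Finset.univ.erase a).card := by
    rw [Finset.card_erase_of_mem (Finset.mem_univ a), Finset.card_univ, Fintype.card_fin]
    omega
  obtain ⟨b, hb, k, hk, hbk⟩ := Finset.one_lt_card.mp hcard
  have hab : r a < r b :=
    (hmin b (Finset.mem_univ b)).lt_of_ne (hdist.ne (Finset.ne_of_mem_erase hb).symm)
  have hmin' : ∀ i, r a ≤ r i := fun i => hmin i (Finset.mem_univ i)
  have hka := Finset.ne_of_mem_erase hk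
  exact ⟨planeConfig r a b k, norm_planeConfig (hpos a) hmin',
    planeConfig_mem_frontier (hpos a) hmin',
    zero_mem_interior_convexHull_planeConfig hka hbk.symm (hpos a) hab hmin'⟩
end

section
/- Let r_1, ..., r_n be positive real numbers (n ≥ 3) such that each value occurs at most 4 times. Then there exist points v_1, ..., v_n in ℝ² with ‖v_i‖ = r_i, such that each v_i is an extreme point of the convex hull of {v_1, ..., v_n} and the origin is in the interior of the convex hull. -/
/-!
An ellipse with semi-axes `a > max r` and `b < min r` meets the circle `‖x‖ = r i` once in each
open quadrant, and distinct points of an ellipse are exposed points of their convex hull. Sort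
the indices by radius and put the `i`-th point in the quadrant given by its rank modulo 4: equal
radii occupy at most four consecutive ranks, so they get distinct points, and for `n ≥ 4` every
quadrant is used, which puts the origin in the interior. For three equal radii any three of the
four points leave the origin on a diagonal, so for `n = 3` the points go on three rays at
angles `0, 2π/3, 4π/3` instead.
-/

open Set

section Convexity

variable {E : Type*}

lemma notMem_convexHull_of_forall_lt [AddCommGroup E] [Module ℝ E] (f : E →ₗ[ℝ] ℝ)
    {s : Set E} {x : E} (h : ∀ y ∈ s, f y < f x) : x ∉ convexHull ℝ s := fun hx =>
  lt_irrefl (f x) (convexHull_min h (convex_halfSpace_lt f.isLinear (f x)) hx)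

variable [NormedAddCommGroup E] [NormedSpace ℝ E] [FiniteDimensional ℝ E]

lemma zero_mem_interior_convexHull_of_sum_smul_eq_zero {ι : Type*} [Fintype ι] [Nonempty ι]
    {v : ι → E} (hspan : Submodule.span ℝ (range v) = ⊤) {μ : ι → ℝ} (hμ : ∀ i, 0 < μ i)
    (hsum : ∑ i, μ i • v i = 0) : (0 : E) ∈ interior (convexHull ℝ (range v)) := by
  -- `L` maps the open set `O` of weights into the hull, and `0 = L (t • μ)` for small `t > 0`.
  set L := Fintype.linearCombination ℝ v
  set O : Set (ι → ℝ) := {w | (∀ i, 0 < w i) ∧ ∑ i, w i < 1}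
  have hO : IsOpen O := by
    simp only [O, ofPred_and, ofPred_forall]
    exact (isOpen_iInter_of_finite fun i => isOpen_lt continuous_const (continuous_apply i)).inter
      (isOpen_lt (continuous_finsetSum _ fun i _ => continuous_apply i) continuous_const)
  have hL : IsOpenMap L := L.isOpenMap_of_finiteDimensional
    ((span_range_eq_top_iff_surjective_fintypeLinearCombination ℝ v).1 hspan)
  have hM : 0 < ∑ i, μ i := Finset.sum_pos (fun i _ => hμ i) Finset.univ_nonempty
  have hLO : L '' O ⊆ convexHull ℝ (range v) := by
    rintro _ ⟨w, ⟨hw, hw1⟩, rfl⟩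
    set s := (1 - ∑ i, w i) / ∑ i, μ i
    have hs : 0 ≤ s := div_nonneg (by linarith) hM.le
    have : L w = ∑ i, (w i + s * μ i) • v i := by
      simp only [L, Fintype.linearCombination_apply, add_smul, Finset.sum_add_distrib, mul_smul,
        ← Finset.smul_sum, hsum, smul_zero, add_zero]
    rw [this]
    refine (convex_convexHull ℝ _).sum_mem
      (fun i _ => add_nonneg (hw i).le (mul_nonneg hs (hμ i).le)) ?_
      (fun i _ => subset_convexHull ℝ _ (mem_range_self i))
    rw [Finset.sum_add_distrib, ← Finset.mul_sum]
    simp only [s]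
    field_simp
    ring
  set t := 1 / (∑ i, μ i + 1)
  have h0 : L (t • μ) = 0 := by
    simp [L, Fintype.linearCombination_apply, hsum]
  refine interior_maximal hLO (hL O hO) ⟨t • μ, ⟨fun i => ?_, ?_⟩, h0⟩
  · simp only [Pi.smul_apply, smul_eq_mul, t]; have := hμ i; positivity
  · simp only [Pi.smul_apply, smul_eq_mul, ← Finset.mul_sum, t]
    rw [div_mul_eq_mul_div, one_mul, div_lt_one (by linarith)]
    linarith

end Convexity

open scoped RealInnerProductSpace

local notation "ℝ²" => EuclideanSpace ℝ (Fin 2)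

lemma inner_eq_fin_two (p q : ℝ²) : ⟪p, q⟫ = p 0 * q 0 + p 1 * q 1 := by
  simp [PiLp.inner_apply, Fin.sum_univ_two, mul_comm]

lemma norm_sq_eq_fin_two (p : ℝ²) : ‖p‖ ^ 2 = p 0 ^ 2 + p 1 ^ 2 := by
  simp [EuclideanSpace.real_norm_sq_eq, Fin.sum_univ_two]

lemma span_range_eq_top_of_det_ne_zero {ι : Type*} {v : ι → ℝ²} (i j : ι)
    (h : v i 0 * v j 1 - v i 1 * v j 0 ≠ 0) : Submodule.span ℝ (range v) = ⊤ := by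
  have hind : LinearIndependent ℝ ![v i, v j] := by
    refine LinearIndependent.pair_iff.2 fun s t hst => ?_
    have h0 := congrFun (congrArg (⇑) hst) 0
    have h1 := congrFun (congrArg (⇑) hst) 1
    simp only [PiLp.add_apply, PiLp.smul_apply, smul_eq_mul, PiLp.zero_apply] at h0 h1
    constructor
    · refine (mul_eq_zero.1 ?_).resolve_right h
      linear_combination v j 1 * h0 - v j 0 * h1
    · refine (mul_eq_zero.1 ?_).resolve_right h
      linear_combination v i 0 * h1 - v i 1 * h0
  refine eq_top_mono (Submodule.span_mono ?_) (hind.span_eq_top_of_card_eq_finrank' (by simp))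
  rintro _ ⟨k, rfl⟩
  fin_cases k <;> simp

def quadrantPoint (q : Fin 4) (x y : ℝ) : ℝ² := !₂[![1, -1, -1, 1] q * x, ![1, 1, -1, -1] q * y]

lemma quadrantPoint_apply_zero_sq (q : Fin 4) (x y : ℝ) : quadrantPoint q x y 0 ^ 2 = x ^ 2 := by
  fin_cases q <;> simp [quadrantPoint]

lemma quadrantPoint_apply_one_sq (q : Fin 4) (x y : ℝ) : quadrantPoint q x y 1 ^ 2 = y ^ 2 := by
  fin_cases q <;> simp [quadrantPoint]

lemma quadrantPoint_left_injective {x y : ℝ} (hx : x ≠ 0) (hy : y ≠ 0) :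
    Function.Injective fun q => quadrantPoint q x y := by
  intro q q' h
  have h0 := congrFun (congrArg (⇑) h) 0
  have h1 := congrFun (congrArg (⇑) h) 1
  simp only [quadrantPoint] at h0 h1
  fin_cases q <;> fin_cases q' <;> simp at h0 h1 ⊢
    <;> first | exact hx (by linarith) | exact hy (by linarith)

lemma zero_mem_interior_convexHull_quadrantPoint {x y : Fin 4 → ℝ} (hx : ∀ q, 0 < x q)
    (hy : ∀ q, 0 < y q) :
    (0 : ℝ²) ∈ interior (convexHull ℝ (range fun q => quadrantPoint q (x q) (y q))) := by
  -- The weights of quadrants 0, 3 (and of 1, 2) combine their points to a point on the first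
  -- axis; the factors `A` and `B` balance these two points.
  set A := y 2 * x 1 + y 1 * x 2
  set B := y 3 * x 0 + y 0 * x 3
  refine zero_mem_interior_convexHull_of_sum_smul_eq_zero
    (span_range_eq_top_of_det_ne_zero 0 1 ?_) (μ := ![A * y 3, B * y 2, B * y 1, A * y 0])
    (fun q => ?_) ?_
  · have := hx 0; have := hx 1; have := hy 0; have := hy 1
    have hdet : 0 < x 0 * y 1 + y 0 * x 1 := by positivity
    simpa [quadrantPoint] using hdet.ne'
  · have := hx 0; have := hx 1; have := hx 2; have := hx 3
    have := hy 0; have := hy 1; have := hy 2; have := hy 3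
    fin_cases q <;> dsimp <;> positivity
  · ext k
    fin_cases k <;> simp [Fin.sum_univ_four, quadrantPoint, A, B] <;> ring

def ellipse (a b : ℝ) : Set ℝ² := {p | (p 0 / a) ^ 2 + (p 1 / b) ^ 2 = 1}

lemma inner_lt_inner_of_mem_ellipse {a b : ℝ} (ha : a ≠ 0) (hb : b ≠ 0) {p q : ℝ²}
    (hp : p ∈ ellipse a b) (hq : q ∈ ellipse a b) (hpq : q ≠ p) :
    ⟪!₂[p 0 / a ^ 2, p 1 / b ^ 2], q⟫ < ⟪!₂[p 0 / a ^ 2, p 1 / b ^ 2], p⟫ := by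
  have hne : q 0 ≠ p 0 ∨ q 1 ≠ p 1 := by
    by_contra! h
    exact hpq (by ext k; fin_cases k <;> simp [h.1, h.2])
  have hdist : 0 < ((q 0 - p 0) / a) ^ 2 + ((q 1 - p 1) / b) ^ 2 := by
    rcases hne with h | h
    · have := sq_pos_of_ne_zero (div_ne_zero (sub_ne_zero.2 h) ha); positivity
    · have := sq_pos_of_ne_zero (div_ne_zero (sub_ne_zero.2 h) hb); positivity
  have key : ⟪!₂[p 0 / a ^ 2, p 1 / b ^ 2], p⟫ - ⟪!₂[p 0 / a ^ 2, p 1 / b ^ 2], q⟫ =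
      (((q 0 - p 0) / a) ^ 2 + ((q 1 - p 1) / b) ^ 2) / 2 := by
    simp only [ellipse, mem_ofPred_eq] at hp hq
    simp only [inner_eq_fin_two, Matrix.cons_val_zero, Matrix.cons_val_one]
    linear_combination (hp - hq) / 2
  linarith

lemma notMem_convexHull_of_mem_ellipse {a b : ℝ} (ha : a ≠ 0) (hb : b ≠ 0) {ι : Type*}
    {v : ι → ℝ²} (hv : Function.Injective v) (h : ∀ i, v i ∈ ellipse a b) (i : ι) :
    v i ∉ convexHull ℝ (v '' {j | j ≠ i}) := by
  refine notMem_convexHull_of_forall_lt (innerₛₗ ℝ !₂[v i 0 / a ^ 2, v i 1 / b ^ 2]) ?_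
  rintro _ ⟨j, hj, rfl⟩
  exact inner_lt_inner_of_mem_ellipse ha hb (h i) (h j) (hv.ne hj)

lemma exists_surjective_injective_on_fibers {n k : ℕ} [NeZero k] (hkn : k ≤ n) {α : Type*}
    [LinearOrder α] (r : Fin n → α) (hfib : ∀ c, {i | r i = c}.ncard ≤ k) :
    ∃ σ : Fin n → Fin k, Function.Surjective σ ∧ ∀ i j, r i = r j → σ i = σ j → i = j := by
  -- In the order sorted by `r`, a fiber of `r` is a block of at most `k` consecutive positions.
  set e := Tuple.sort r
  have hmono : Monotone (r ∘ e) := Tuple.monotone_sort r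
  refine ⟨fun i => Fin.ofNat k (e.symm i), fun q => ⟨e ⟨q, q.2.trans_le hkn⟩, ?_⟩, ?_⟩
  · ext; simp
  · intro i j hr hσ
    by_contra hij
    wlog hlt : e.symm i < e.symm j generalizing i j
    · exact this j i hr.symm hσ.symm (Ne.symm hij)
        ((e.symm.injective.ne hij).lt_or_gt.resolve_left hlt)
    set p := e.symm i
    set p' := e.symm j
    have hblock : (Finset.Icc p p').card ≤ k := by
      refine le_trans ?_ ((ncard_eq_toFinset_card' _).symm.trans_le (hfib (r i)))
      refine Finset.card_le_card_of_injOn e (fun t ht => ?_) e.injective.injOn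
      obtain ⟨hpt, htp'⟩ := Finset.mem_Icc.1 ht
      have h1 : r (e p) ≤ r (e t) := hmono hpt
      have h2 : r (e t) ≤ r (e p') := hmono htp'
      simp only [p, p', Equiv.apply_symm_apply] at h1 h2
      simp only [Finset.mem_coe, mem_toFinset, mem_ofPred_eq]
      exact le_antisymm (hr ▸ h2) h1
    have hdvd : k ∣ (p' : ℕ) - p := by
      have := congrArg Fin.val hσ
      simp only [Fin.val_ofNat] at this
      exact Nat.dvd_of_mod_eq_zero (Nat.sub_mod_eq_zero_of_mod_eq this.symm)
    have := Nat.le_of_dvd (by omega) hdvd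
    simp only [Fin.card_Icc] at hblock
    omega

noncomputable def ellipseX (a b r : ℝ) : ℝ := a * √((r ^ 2 - b ^ 2) / (a ^ 2 - b ^ 2))

noncomputable def ellipseY (a b r : ℝ) : ℝ := b * √((a ^ 2 - r ^ 2) / (a ^ 2 - b ^ 2))

section EllipseCoordinates

variable {a b r : ℝ} (hb : 0 < b) (hbr : b < r) (hra : r < a)
include hb hbr hra

lemma ellipseX_pos : 0 < ellipseX a b r :=
  mul_pos (by linarith) (Real.sqrt_pos.2 (div_pos (by nlinarith) (by nlinarith)))

lemma ellipseY_pos : 0 < ellipseY a b r :=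
  mul_pos hb (Real.sqrt_pos.2 (div_pos (by nlinarith) (by nlinarith)))

lemma ellipseX_sq : ellipseX a b r ^ 2 = a ^ 2 * ((r ^ 2 - b ^ 2) / (a ^ 2 - b ^ 2)) := by
  rw [ellipseX, mul_pow, Real.sq_sqrt (div_nonneg (by nlinarith) (by nlinarith))]

lemma ellipseY_sq : ellipseY a b r ^ 2 = b ^ 2 * ((a ^ 2 - r ^ 2) / (a ^ 2 - b ^ 2)) := by
  rw [ellipseY, mul_pow, Real.sq_sqrt (div_nonneg (by nlinarith) (by nlinarith))]

lemma norm_quadrantPoint_ellipse (q : Fin 4) :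
    ‖quadrantPoint q (ellipseX a b r) (ellipseY a b r)‖ = r := by
  rw [← sq_eq_sq₀ (norm_nonneg _) (by linarith), norm_sq_eq_fin_two, quadrantPoint_apply_zero_sq,
    quadrantPoint_apply_one_sq, ellipseX_sq hb hbr hra, ellipseY_sq hb hbr hra]
  field_simp [show a ^ 2 - b ^ 2 ≠ 0 by nlinarith]
  ring

lemma quadrantPoint_mem_ellipse (q : Fin 4) :
    quadrantPoint q (ellipseX a b r) (ellipseY a b r) ∈ ellipse a b := by
  rw [ellipse, mem_ofPred_eq, div_pow, div_pow, quadrantPoint_apply_zero_sq,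
    quadrantPoint_apply_one_sq, ellipseX_sq hb hbr hra, ellipseY_sq hb hbr hra]
  field_simp [show a ^ 2 - b ^ 2 ≠ 0 by nlinarith, show a ≠ 0 by nlinarith, hb.ne']
  ring

end EllipseCoordinates

lemma ellipseX_injOn {a b : ℝ} (hb : 0 < b) : InjOn (ellipseX a b) (Ioo b a) := by
  rintro r ⟨hbr, hra⟩ r' ⟨hbr', hra'⟩ h
  have h2 := congrArg (· ^ 2) h
  simp only [ellipseX_sq hb hbr hra, ellipseX_sq hb hbr' hra'] at h2
  field_simp [show a ^ 2 - b ^ 2 ≠ 0 by nlinarith, show a ≠ 0 by nlinarith] at h2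
  nlinarith

noncomputable def triangleDir : Fin 3 → ℝ² := ![!₂[1, 0], !₂[-1 / 2, √3 / 2], !₂[-1 / 2, -(√3 / 2)]]

lemma inner_triangleDir (i j : Fin 3) :
    ⟪triangleDir i, triangleDir j⟫ = if i = j then 1 else -1 / 2 := by
  have h3 : √3 ^ 2 = 3 := Real.sq_sqrt (by norm_num)
  rw [inner_eq_fin_two]
  fin_cases i <;> fin_cases j <;> simp [triangleDir] <;> linarith

lemma sum_triangleDir : ∑ i, triangleDir i = 0 := by
  ext k
  fin_cases k <;> simp [Fin.sum_univ_three, triangleDir]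
  norm_num

lemma exists_convexPosition_fin_three (r : Fin 3 → ℝ) (hpos : ∀ i, 0 < r i) :
    ∃ v : Fin 3 → ℝ², (∀ i, ‖v i‖ = r i) ∧ (∀ i, v i ∉ convexHull ℝ (v '' {j | j ≠ i})) ∧
      (0 : ℝ²) ∈ interior (convexHull ℝ (range v)) := by
  refine ⟨fun i => r i • triangleDir i, fun i => ?_, fun i => ?_, ?_⟩
  · have h : ‖triangleDir i‖ ^ 2 = 1 ^ 2 := by
      rw [← real_inner_self_eq_norm_sq, inner_triangleDir, if_pos rfl, one_pow]
    rw [norm_smul, (sq_eq_sq₀ (norm_nonneg _) zero_le_one).1 h, mul_one,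
      Real.norm_of_nonneg (hpos i).le]
  · refine notMem_convexHull_of_forall_lt (innerₛₗ ℝ (triangleDir i)) ?_
    rintro _ ⟨j, hj, rfl⟩
    have := hpos i
    have := hpos j
    rw [innerₛₗ_apply_apply, innerₛₗ_apply_apply, real_inner_smul_right, real_inner_smul_right,
      inner_triangleDir, inner_triangleDir, if_pos rfl, if_neg (Ne.symm hj)]
    linarith
  · refine zero_mem_interior_convexHull_of_sum_smul_eq_zero
      (span_range_eq_top_of_det_ne_zero 0 1 ?_) (μ := fun i => (r i)⁻¹)
      (fun i => inv_pos.2 (hpos i)) ?_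
    · simpa [triangleDir] using ⟨(hpos 0).ne', (hpos 1).ne'⟩
    · simp only [smul_smul, inv_mul_cancel₀ (hpos _).ne', one_smul, sum_triangleDir]

lemma exists_convexPosition_of_four_le {n : ℕ} (hn : 4 ≤ n) (r : Fin n → ℝ)
    (hpos : ∀ i, 0 < r i) (hmult : ∀ c : ℝ, {i : Fin n | r i = c}.ncard ≤ 4) :
    ∃ v : Fin n → ℝ², (∀ i, ‖v i‖ = r i) ∧ (∀ i, v i ∉ convexHull ℝ (v '' {j | j ≠ i})) ∧
      (0 : ℝ²) ∈ interior (convexHull ℝ (range v)) := by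
  have i₀ : Fin n := ⟨0, by omega⟩
  have : Nonempty (Fin n) := ⟨i₀⟩
  obtain ⟨a, b, hb, hbr, hra⟩ : ∃ a b : ℝ, 0 < b ∧ (∀ i, b < r i) ∧ ∀ i, r i < a := by
    obtain ⟨j₀, hj₀⟩ := Finite.exists_min r
    obtain ⟨j₁, hj₁⟩ := Finite.exists_max r
    exact ⟨r j₁ + 1, r j₀ / 2, half_pos (hpos j₀), fun i => by linarith [hj₀ i, hpos j₀],
      fun i => by linarith [hj₁ i]⟩
  obtain ⟨σ, hσ, hσinj⟩ := exists_surjective_injective_on_fibers hn r hmult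
  set v := fun i => quadrantPoint (σ i) (ellipseX a b (r i)) (ellipseY a b (r i))
  have hv : Function.Injective v := by
    intro i j h
    have hX : ellipseX a b (r i) = ellipseX a b (r j) := by
      have h0 := congrArg (· ^ 2) (congrFun (congrArg (⇑) h) 0)
      simp only [v, quadrantPoint_apply_zero_sq] at h0
      exact (sq_eq_sq₀ (ellipseX_pos hb (hbr i) (hra i)).le
        (ellipseX_pos hb (hbr j) (hra j)).le).1 h0
    have hr : r i = r j := ellipseX_injOn hb ⟨hbr i, hra i⟩ ⟨hbr j, hra j⟩ hX
    refine hσinj i j hr (quadrantPoint_left_injective (ellipseX_pos hb (hbr j) (hra j)).ne'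
      (ellipseY_pos hb (hbr j) (hra j)).ne' ?_)
    simpa only [v, hr] using h
  refine ⟨v, fun i => norm_quadrantPoint_ellipse hb (hbr i) (hra i) _,
    notMem_convexHull_of_mem_ellipse (hb.trans ((hbr i₀).trans (hra i₀))).ne' hb.ne' hv
      fun i => quadrantPoint_mem_ellipse hb (hbr i) (hra i) _, ?_⟩
  set τ := Function.surjInv hσ
  refine interior_mono (convexHull_mono ?_) (zero_mem_interior_convexHull_quadrantPoint
    (x := fun q => ellipseX a b (r (τ q))) (y := fun q => ellipseY a b (r (τ q)))
    (fun q => ellipseX_pos hb (hbr _) (hra _)) (fun q => ellipseY_pos hb (hbr _) (hra _)))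
  rintro _ ⟨q, rfl⟩
  exact ⟨τ q, by simp only [v, τ, Function.surjInv_eq hσ]⟩

theorem stmt6 (n : ℕ) (hn : 3 ≤ n) (r : Fin n → ℝ)
    (hpos : ∀ i, 0 < r i) (hmult : ∀ c : ℝ, {i : Fin n | r i = c}.ncard ≤ 4) :
    ∃ v : Fin n → EuclideanSpace ℝ (Fin 2),
      (∀ i, ‖v i‖ = r i) ∧
      (∀ i, v i ∉ convexHull ℝ (v '' {j | j ≠ i})) ∧
      (0 : EuclideanSpace ℝ (Fin 2)) ∈ interior (convexHull ℝ (Set.range v)) := by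
  obtain rfl | h4 : n = 3 ∨ 4 ≤ n := by omega
  · exact exists_convexPosition_fin_three r hpos
  · exact exists_convexPosition_of_four_le h4 r hpos hmult
end

section
/- Given n ≥ 4 pairwise distinct positive real numbers r_1, ..., r_n, there exist points v_1, ..., v_n in ℝ³ with ‖v_i‖ = r_i for all i such that every v_i is an extreme point of the convex hull of {v_1, ..., v_n} and the origin lies in the interior of this convex hull. -/
/-!
Put every point on the vertical cylinder of radius `s < min rᵢ` around the `z`-axis:
`vᵢ = s uᵢ + zᵢ e₃` with distinct horizontal unit vectors `uᵢ` and `zᵢ = ±√(rᵢ² - s²)`, so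
`‖vᵢ‖ = rᵢ`. The functional `⟪uᵢ, ·⟫` equals `s` at `vᵢ` and is `< s` at every other point,
since distinct unit vectors have inner product `< 1`; hence each `vᵢ` is extreme. For the interior,
take `u₀, u₁, u₂ = -u₀, u₃ = -u₁` with heights of signs `+, -, +, -`: these four points form a
tetrahedron, and `0` is a combination of them with positive weights `α, β, α, β`.
-/

open Set Module Real
open scoped InnerProductSpace

section InnerProductSpace

variable {E : Type*} [NormedAddCommGroup E] [InnerProductSpace ℝ E]

theorem notMem_convexHull_of_inner_lt {S : Set E} {x u : E}
    (h : ∀ y ∈ S, ⟪u, y⟫_ℝ < ⟪u, x⟫_ℝ) : x ∉ convexHull ℝ S := fun hx =>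
  lt_irrefl ⟪u, x⟫_ℝ (convexHull_min h (convex_halfSpace_lt (innerₛₗ ℝ u).isLinear _) hx)

theorem notMem_convexHull_cylinder {ι : Type*} {u : ι → E} (hu : Function.Injective u)
    (hu1 : ∀ i, ‖u i‖ = 1) {e : E} (hue : ∀ i, ⟪u i, e⟫_ℝ = 0) {s : ℝ} (hs : 0 < s)
    (z : ι → ℝ) (i : ι) :
    s • u i + z i • e ∉ convexHull ℝ ((fun j => s • u j + z j • e) '' {j | j ≠ i}) := by
  refine notMem_convexHull_of_inner_lt (u := u i) ?_
  rintro _ ⟨j, hj, rfl⟩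
  have hlt : ⟪u i, u j⟫_ℝ < 1 :=
    (inner_lt_one_iff_real_of_norm_eq_one (hu1 i) (hu1 j)).2 (hu.ne (Ne.symm hj))
  simp only [inner_add_right, real_inner_smul_right, hue, real_inner_self_eq_norm_sq, hu1]
  nlinarith

theorem norm_smul_add_smul_sq_of_inner_eq_zero {u e : E} (hu : ‖u‖ = 1) (he : ‖e‖ = 1)
    (hue : ⟪u, e⟫_ℝ = 0) (s z : ℝ) : ‖s • u + z • e‖ ^ 2 = s ^ 2 + z ^ 2 := by
  rw [norm_add_sq_real, real_inner_smul_left, real_inner_smul_right, hue, norm_smul, norm_smul,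
    hu, he, mul_one, mul_one, Real.norm_eq_abs, Real.norm_eq_abs, sq_abs, sq_abs]
  ring

end InnerProductSpace

section NormedSpace

variable {E : Type*} [NormedAddCommGroup E] [NormedSpace ℝ E]

theorem sum_smul_mem_interior_convexHull {ι : Type*} [Fintype ι] [FiniteDimensional ℝ E]
    {p : ι → E} (hp : AffineIndependent ℝ p) (hcard : Fintype.card ι = finrank ℝ E + 1)
    {w : ι → ℝ} (hw : ∀ i, 0 < w i) (hw1 : ∑ i, w i = 1) :
    ∑ i, w i • p i ∈ interior (convexHull ℝ (range p)) := by
  let b : AffineBasis ι ℝ E := ⟨p, hp, hp.affineSpan_eq_top_iff_card_eq_finrank_add_one.2 hcard⟩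
  rw [← Finset.univ.affineCombination_eq_linear_combination p w hw1]
  change _ ∈ interior (convexHull ℝ (range b))
  rw [b.interior_convexHull]
  intro i
  convert hw i using 1
  exact b.coord_apply_combination_of_mem (Finset.mem_univ i) hw1

theorem affineIndependent_antipodal_pairs {a b e : E} (hli : LinearIndependent ℝ ![a, b, e])
    {z : Fin 4 → ℝ} (hz : z 1 + z 3 < z 0 + z 2) :
    AffineIndependent ℝ ![a + z 0 • e, b + z 1 • e, -a + z 2 • e, -b + z 3 • e] := by
  rw [affineIndependent_iff_of_fintype]
  intro w hw0 hw i
  rw [Finset.weightedVSub_eq_linear_combination _ hw0, Fin.sum_univ_four] at hw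
  simp only [Matrix.cons_val_zero, Matrix.cons_val_one, Matrix.cons_val_two,
    Matrix.cons_val_three, Matrix.head_cons, Matrix.tail_cons] at hw
  have hcomb : ∑ k, ![w 0 - w 2, w 1 - w 3, ∑ k, w k * z k] k • ![a, b, e] k = 0 := by
    rw [← hw, Fin.sum_univ_three, Fin.sum_univ_four]
    simp only [Matrix.cons_val_zero, Matrix.cons_val_one, Matrix.cons_val_two,
      Matrix.head_cons, Matrix.tail_cons]
    module
  have hcoef := Fintype.linearIndependent_iff.1 hli _ hcomb
  have h0 := hcoef 0
  have h1 := hcoef 1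
  have h2 := hcoef 2
  simp only [Matrix.cons_val_zero, Matrix.cons_val_one, Matrix.cons_val_two, Matrix.head_cons,
    Matrix.tail_cons, Fin.sum_univ_four] at h0 h1 h2
  rw [Fin.sum_univ_four] at hw0
  have h20 : w 2 = w 0 := by linarith
  have h31 : w 3 = w 1 := by linarith
  have h10 : w 1 = -w 0 := by linarith
  rw [h20, h31, h10] at h2
  have hw00 : w 0 = 0 := by
    refine (mul_eq_zero.1 (?_ : w 0 * (z 0 + z 2 - (z 1 + z 3)) = 0)).resolve_right (by linarith)
    linear_combination h2
  match i with
  | 0 => exact hw00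
  | 1 => linarith
  | 2 => linarith
  | 3 => linarith

theorem zero_mem_interior_convexHull_antipodal_pairs [FiniteDimensional ℝ E]
    (hE : finrank ℝ E = 3) {a b e : E} (hli : LinearIndependent ℝ ![a, b, e]) {z : Fin 4 → ℝ}
    (h02 : 0 < z 0 + z 2) (h13 : z 1 + z 3 < 0) :
    (0 : E) ∈
      interior (convexHull ℝ (range ![a + z 0 • e, b + z 1 • e, -a + z 2 • e, -b + z 3 • e])) := by
  set D := 2 * (z 0 + z 2 - (z 1 + z 3))
  have hD : 0 < D := by linarith
  set α := -(z 1 + z 3) / D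
  set β := (z 0 + z 2) / D
  have hα : 0 < α := div_pos (by linarith) hD
  have hβ : 0 < β := div_pos h02 hD
  have hsum : ∑ i, ![α, β, α, β] i = 1 := by
    simp only [Fin.sum_univ_four, Matrix.cons_val_zero, Matrix.cons_val_one, Matrix.cons_val_two,
      Matrix.cons_val_three, Matrix.head_cons, Matrix.tail_cons, α, β]
    field_simp
    ring
  have hcomb : ∑ i, ![α, β, α, β] i • ![a + z 0 • e, b + z 1 • e, -a + z 2 • e, -b + z 3 • e] i
      = 0 := by
    simp only [Fin.sum_univ_four, Matrix.cons_val_zero, Matrix.cons_val_one, Matrix.cons_val_two,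
      Matrix.cons_val_three, Matrix.head_cons, Matrix.tail_cons]
    have hvert : α * (z 0 + z 2) + β * (z 1 + z 3) = 0 := by
      simp only [α, β]
      field_simp
      ring
    calc _ = (α * (z 0 + z 2) + β * (z 1 + z 3)) • e := by module
      _ = 0 := by rw [hvert, zero_smul]
  rw [← hcomb]
  exact sum_smul_mem_interior_convexHull (affineIndependent_antipodal_pairs hli (by linarith))
    (by simp [hE]) (by intro i; fin_cases i <;> assumption) hsum

end NormedSpace

theorem exists_pos_forall_lt {ι : Type*} [Finite ι] {r : ι → ℝ} (hr : ∀ i, 0 < r i) :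
    ∃ s, 0 < s ∧ ∀ i, s < r i := by
  rcases isEmpty_or_nonempty ι with _ | _
  · exact ⟨1, one_pos, isEmptyElim⟩
  · obtain ⟨i₀, hi₀⟩ := Finite.exists_min r
    exact ⟨r i₀ / 2, half_pos (hr i₀), fun i => (half_lt_self (hr i₀)).trans_le (hi₀ i)⟩

theorem cos_sin_injOn : InjOn (fun θ : ℝ => (cos θ, sin θ)) (Ioc (-π) π) := by
  intro x hx y hy h
  simp only [Prod.mk.injEq] at h
  rw [← Complex.arg_cos_add_sin_mul_I hx, ← Complex.arg_cos_add_sin_mul_I hy,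
    ← Complex.ofReal_cos, ← Complex.ofReal_sin, ← Complex.ofReal_cos, ← Complex.ofReal_sin,
    h.1, h.2]

noncomputable def planarDir (θ : ℝ) : EuclideanSpace ℝ (Fin 3) := !₂[cos θ, sin θ, 0]

theorem norm_planarDir (θ : ℝ) : ‖planarDir θ‖ = 1 := by
  rw [EuclideanSpace.norm_eq, Fin.sum_univ_three]
  simp [planarDir, cos_sq_add_sin_sq]

theorem inner_planarDir_single_two (θ : ℝ) :
    ⟪planarDir θ, EuclideanSpace.single 2 (1 : ℝ)⟫_ℝ = 0 := by
  simp [planarDir, PiLp.inner_apply]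

theorem planarDir_add_pi (θ : ℝ) : planarDir (θ + π) = -planarDir θ := by
  ext i
  fin_cases i <;> simp [planarDir]

theorem planarDir_injOn : InjOn planarDir (Ioc (-π) π) := by
  intro x hx y hy h
  refine cos_sin_injOn hx hy (Prod.ext ?_ ?_)
  · simpa [planarDir] using congrArg (· 0) h
  · simpa [planarDir] using congrArg (· 1) h

theorem linearIndependent_planarDir {s : ℝ} (hs : s ≠ 0) (θ : ℝ) :
    LinearIndependent ℝ
      ![s • planarDir θ, s • planarDir (θ + π / 2), EuclideanSpace.single 2 (1 : ℝ)] := by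
  rw [Fintype.linearIndependent_iff]
  intro g hg
  have hc : ∀ m, (∑ k, g k • ![s • planarDir θ, s • planarDir (θ + π / 2),
      EuclideanSpace.single 2 (1 : ℝ)] k) m = 0 := fun m => by rw [hg]; rfl
  have h0 := hc 0
  have h1 := hc 1
  have h2 := hc 2
  simp only [planarDir, cos_add_pi_div_two, sin_add_pi_div_two, Fin.sum_univ_three,
    Matrix.cons_val_zero, Matrix.cons_val_one, Matrix.cons_val, PiLp.add_apply, PiLp.smul_apply,
    smul_eq_mul, PiLp.single_apply, Fin.reduceEq, if_true, if_false, mul_zero, mul_one,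
    add_zero, zero_add, mul_neg] at h0 h1 h2
  have hg0 : g 0 * s = 0 := by
    linear_combination cos θ * h0 + sin θ * h1 - g 0 * s * sin_sq_add_cos_sq θ
  have hg1 : g 1 * s = 0 := by
    linear_combination -sin θ * h0 + cos θ * h1 - g 1 * s * sin_sq_add_cos_sq θ
  intro i
  fin_cases i
  · exact (mul_eq_zero.1 hg0).resolve_right hs
  · exact (mul_eq_zero.1 hg1).resolve_right hs
  · exact h2

/-- Indices `0, 1, 2, 3` get the directions `-y, x, y, -x` (two antipodal pairs); all later
indices get distinct directions in the open first quadrant. -/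
noncomputable def vertexAngle (i : ℕ) : ℝ := if i < 4 then ((i : ℝ) - 1) * (π / 2) else 1 / i

theorem vertexAngle_mem_Ioc (i : ℕ) : vertexAngle i ∈ Ioc (-π) π := by
  unfold vertexAngle
  split_ifs with hi
  · have : (i : ℝ) ≤ 3 := by exact_mod_cast Nat.lt_succ_iff.1 hi
    constructor <;> nlinarith [pi_pos, (Nat.cast_nonneg i : (0 : ℝ) ≤ i)]
  · have : (4 : ℝ) ≤ i := by exact_mod_cast not_lt.1 hi
    constructor
    · linarith [pi_pos, one_div_pos.2 (show (0 : ℝ) < i by linarith)]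
    · rw [div_le_iff₀ (by linarith)]
      nlinarith [pi_gt_three]

theorem sub_one_mul_pi_div_two_ne_one_div {i j : ℕ} (hi : i < 4) (hj : 4 ≤ j) :
    ((i : ℝ) - 1) * (π / 2) ≠ 1 / j := by
  have hj0 : (0 : ℝ) < 1 / j := one_div_pos.2 (by exact_mod_cast (by omega : 0 < j))
  have hj1 : 1 / (j : ℝ) < 1 := (div_lt_one (by exact_mod_cast (by omega : 0 < j))).2
    (by exact_mod_cast (by omega : 1 < j))
  generalize 1 / (j : ℝ) = t at *
  interval_cases i <;> norm_num <;> linarith [pi_gt_three]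

theorem vertexAngle_injective : Function.Injective vertexAngle := by
  intro i j h
  unfold vertexAngle at h
  split_ifs at h with hi hj hj
  · exact_mod_cast sub_left_inj.1 (mul_right_cancel₀ (by positivity) h)
  · exact absurd h (sub_one_mul_pi_div_two_ne_one_div hi (not_lt.1 hj))
  · exact absurd h.symm (sub_one_mul_pi_div_two_ne_one_div hj (not_lt.1 hi))
  · rw [one_div, one_div, inv_inj] at h
    exact_mod_cast h

theorem vertexAngle_of_lt_four {i : ℕ} (hi : i < 4) :
    vertexAngle i = -(π / 2) + i * (π / 2) := by
  rw [vertexAngle, if_pos hi]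
  ring

theorem vertexAngle_one : vertexAngle 1 = vertexAngle 0 + π / 2 := by
  rw [vertexAngle_of_lt_four (by omega), vertexAngle_of_lt_four (by omega)]
  push_cast
  ring

theorem planarDir_vertexAngle_add_two {i : ℕ} (hi : i < 2) :
    planarDir (vertexAngle (i + 2)) = -planarDir (vertexAngle i) := by
  rw [vertexAngle_of_lt_four (by omega), vertexAngle_of_lt_four (by omega), ← planarDir_add_pi]
  congr 1
  push_cast
  ring

theorem planarDir_vertexAngle_injective : Function.Injective (planarDir ∘ vertexAngle) :=
  fun _ _ h => vertexAngle_injective <|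
    planarDir_injOn (vertexAngle_mem_Ioc _) (vertexAngle_mem_Ioc _) h

theorem norm_smul_planarDir_add_smul_single {s r z : ℝ} (hr : 0 ≤ r)
    (hz : z ^ 2 = r ^ 2 - s ^ 2) (θ : ℝ) :
    ‖s • planarDir θ + z • EuclideanSpace.single 2 (1 : ℝ)‖ = r := by
  rw [← sq_eq_sq₀ (norm_nonneg _) hr, norm_smul_add_smul_sq_of_inner_eq_zero
    (norm_planarDir _) (by simp) (inner_planarDir_single_two _), hz]
  ring

theorem zero_mem_interior_convexHull_alternating {n : ℕ} (hn : 4 ≤ n) {s : ℝ} (hs : 0 < s)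
    {h : Fin n → ℝ} (hh : ∀ i, 0 < h i) :
    (0 : EuclideanSpace ℝ (Fin 3)) ∈ interior (convexHull ℝ (range fun i : Fin n =>
      s • planarDir (vertexAngle i) + ((-1) ^ (i : ℕ) * h i) • EuclideanSpace.single 2 1)) := by
  let k : Fin 4 → Fin n := Fin.castLE hn
  have hli : LinearIndependent ℝ ![s • planarDir (vertexAngle (k 0)),
      s • planarDir (vertexAngle (k 1)), EuclideanSpace.single 2 1] := by
    simpa [k, vertexAngle_one] using linearIndependent_planarDir hs.ne' (vertexAngle 0)
  have h02 : 0 < (-1) ^ 0 * h (k 0) + (-1) ^ 2 * h (k 2) := by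
    linarith [hh (k 0), hh (k 2)]
  have h13 : (-1) ^ 1 * h (k 1) + (-1) ^ 3 * h (k 3) < 0 := by
    linarith [hh (k 1), hh (k 3)]
  refine interior_mono (convexHull_mono ?_) (zero_mem_interior_convexHull_antipodal_pairs
    finrank_euclideanSpace_fin hli (z := fun j => (-1) ^ (j : ℕ) * h (k j)) h02 h13)
  rintro _ ⟨j, rfl⟩
  exact ⟨k j, by fin_cases j <;> simp [k, planarDir_vertexAngle_add_two]⟩

theorem stmt8_general (n : ℕ) (hn : 4 ≤ n) (r : Fin n → ℝ)
    (hpos : ∀ i, 0 < r i) :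
    ∃ v : Fin n → EuclideanSpace ℝ (Fin 3),
      (∀ i, ‖v i‖ = r i) ∧
      (∀ i, v i ∉ convexHull ℝ (v '' {j | j ≠ i})) ∧
      (0 : EuclideanSpace ℝ (Fin 3)) ∈ interior (convexHull ℝ (Set.range v)) := by
  obtain ⟨s, hs, hsr⟩ := exists_pos_forall_lt hpos
  have hrs : ∀ i, 0 < r i ^ 2 - s ^ 2 := fun i => by nlinarith [hsr i]
  refine ⟨fun i => s • planarDir (vertexAngle i) +
      ((-1) ^ (i : ℕ) * √(r i ^ 2 - s ^ 2)) • EuclideanSpace.single 2 1, fun i => ?_,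
    notMem_convexHull_cylinder (planarDir_vertexAngle_injective.comp Fin.val_injective)
      (fun _ => norm_planarDir _) (fun _ => inner_planarDir_single_two _) hs _,
    zero_mem_interior_convexHull_alternating hn hs fun i => Real.sqrt_pos.2 (hrs i)⟩
  refine norm_smul_planarDir_add_smul_single (hpos i).le ?_ _
  rw [mul_pow, ← pow_mul, pow_mul', neg_one_sq, one_pow, one_mul, Real.sq_sqrt (hrs i).le]

theorem stmt8 (n : ℕ) (hn : 4 ≤ n) (r : Fin n → ℝ)
    (hpos : ∀ i, 0 < r i) (hdist : Function.Injective r) :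
    ∃ v : Fin n → EuclideanSpace ℝ (Fin 3),
      (∀ i, ‖v i‖ = r i) ∧
      (∀ i, v i ∉ convexHull ℝ (v '' {j | j ≠ i})) ∧
      (0 : EuclideanSpace ℝ (Fin 3)) ∈ interior (convexHull ℝ (Set.range v)) :=
  stmt8_general n hn r hpos
end

section
/- Let w_1, ..., w_n ∈ [0, π/2) with n ≥ 4 and set r_i = 1/cos(w_i). Then there exist points P_1, ..., P_n in ℝ³ with ‖P_i‖ = r_i such that every P_i is an extreme point of the convex hull of {P_1, ..., P_n} and the origin is in the interior of the convex hull. -/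
/-!
Place the points on the ellipsoid `(x² + y²) / a² + z² / b² = 1` with `b < rᵢ < a`: it meets the
sphere of radius `rᵢ` in two horizontal circles, and the `i`-th point is put on one of them in
a horizontal direction depending injectively on `i`. Points of an ellipsoid are in convex position,
since the ellipsoid is the image of the unit sphere under a linear map and at a unit vector `u` the
hyperplane `⟪u, x⟫ = 1` supports the sphere strictly (Cauchy–Schwarz). The first four points
have horizontal directions `-e₁, -e₂, e₁, e₂` and heights of alternating signs, so they form a
tetrahedron in which the origin has positive barycentric coordinates.
-/

open Set Module RealInnerProductSpace

theorem notMem_convexHull_image_ne_of_norm_eq_one {ι F : Type*} [NormedAddCommGroup F]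
    [InnerProductSpace ℝ F] {f : ι → F} (hf : f.Injective) (hf1 : ∀ i, ‖f i‖ = 1) (i : ι) :
    f i ∉ convexHull ℝ (f '' {j | j ≠ i}) := by
  intro hmem
  have hsub : f '' {j | j ≠ i} ⊆ {x | ⟪f i, x⟫ < 1} := by
    rintro _ ⟨j, hj, rfl⟩
    exact (inner_lt_one_iff_real_of_norm_eq_one (hf1 i) (hf1 j)).2 (hf.ne (Ne.symm hj))
  have := convexHull_min hsub (convex_halfSpace_lt (innerₛₗ ℝ (f i)).isLinear 1) hmem
  simp [hf1 i] at this

theorem notMem_convexHull_image_ne_of_norm_map_eq_one {ι E F : Type*} [AddCommGroup E]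
    [Module ℝ E] [NormedAddCommGroup F] [InnerProductSpace ℝ F] (φ : E →ₗ[ℝ] F) {f : ι → E}
    (hf : (φ ∘ f).Injective) (hf1 : ∀ i, ‖φ (f i)‖ = 1) (i : ι) :
    f i ∉ convexHull ℝ (f '' {j | j ≠ i}) := by
  intro hmem
  apply notMem_convexHull_image_ne_of_norm_eq_one hf hf1 i
  rw [image_comp, ← φ.image_convexHull]
  exact mem_image_of_mem φ hmem

theorem AffineIndependent.zero_mem_interior_convexHull {ι E : Type*} [Fintype ι]
    [NormedAddCommGroup E] [NormedSpace ℝ E] [FiniteDimensional ℝ E] {v : ι → E}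
    (hv : AffineIndependent ℝ v) (hcard : Fintype.card ι = finrank ℝ E + 1) {w : ι → ℝ}
    (hw : ∀ i, 0 < w i) (hvw : ∑ i, w i • v i = 0) :
    (0 : E) ∈ interior (convexHull ℝ (range v)) := by
  let b : AffineBasis ι ℝ E := ⟨v, hv, hv.affineSpan_eq_top_iff_card_eq_finrank_add_one.2 hcard⟩
  have : Nonempty ι := Fintype.card_pos_iff.1 (by omega)
  have hW : 0 < ∑ i, w i := Finset.sum_pos (fun i _ => hw i) Finset.univ_nonempty
  set μ : ι → ℝ := fun i => w i / ∑ j, w j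
  have hμ : ∑ i, μ i = 1 := by simp only [μ, ← Finset.sum_div, div_self hW.ne']
  have hcomb : Finset.univ.affineCombination ℝ v μ = 0 := by
    rw [Finset.affineCombination_eq_linear_combination _ _ _ hμ]
    simp only [μ, div_eq_inv_mul, mul_smul, ← Finset.smul_sum, hvw, smul_zero]
  change (0 : E) ∈ interior (convexHull ℝ (range b))
  rw [b.interior_convexHull]
  intro i
  have hcoord := b.coord_apply_combination_of_mem (Finset.mem_univ i) hμ
  rw [show ⇑b = v from rfl, hcomb] at hcoord
  rw [hcoord]
  exact div_pos (hw i) hW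

def tetrahedronAroundZero (a b : Fin 4 → ℝ) : Fin 4 → EuclideanSpace ℝ (Fin 3) :=
  ![!₂[-a 0, 0, b 0], !₂[0, -a 1, -b 1], !₂[a 2, 0, b 2], !₂[0, a 3, -b 3]]

section tetrahedronAroundZero

variable {a b : Fin 4 → ℝ} (ha : ∀ k, 0 < a k) (hb : ∀ k, 0 < b k)
include ha hb

theorem affineIndependent_tetrahedronAroundZero :
    AffineIndependent ℝ (tetrahedronAroundZero a b) := by
  rw [affineIndependent_iff_of_fintype]
  intro μ hμ hzero
  rw [Finset.weightedVSub_eq_linear_combination _ hμ] at hzero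
  rw [Fin.sum_univ_four] at hμ
  have hx : -(μ 0 * a 0) + μ 2 * a 2 = 0 := by
    simpa [Fin.sum_univ_four, tetrahedronAroundZero] using congrArg (· 0) hzero
  have hy : -(μ 1 * a 1) + μ 3 * a 3 = 0 := by
    simpa [Fin.sum_univ_four, tetrahedronAroundZero] using congrArg (· 1) hzero
  have hz : μ 0 * b 0 - μ 1 * b 1 + μ 2 * b 2 - μ 3 * b 3 = 0 := by
    simpa [Fin.sum_univ_four, tetrahedronAroundZero, sub_eq_add_neg] using congrArg (· 2) hzero
  have h2 : μ 2 = μ 0 * (a 0 / a 2) := by field_simp [(ha 2).ne']; linarith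
  have h3 : μ 3 = μ 1 * (a 1 / a 3) := by field_simp [(ha 3).ne']; linarith
  rw [h2, h3] at hμ hz
  -- `hμ` and `hz` are a 2×2 system in `μ 0`, `μ 1` with determinant `-(p * u + q * s) < 0`.
  set p := 1 + a 0 / a 2
  set q := 1 + a 1 / a 3
  set s := b 0 + b 2 * (a 0 / a 2)
  set u := b 1 + b 3 * (a 1 / a 3)
  have hdet : 0 < p * u + q * s := by
    have := ha 0; have := ha 1; have := ha 2; have := ha 3
    have := hb 0; have := hb 1; have := hb 2; have := hb 3
    positivity
  have h0 : μ 0 = 0 := by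
    have : μ 0 * (p * u + q * s) = 0 := by linear_combination u * hμ + q * hz
    exact (mul_eq_zero.1 this).resolve_right hdet.ne'
  have h1 : μ 1 = 0 := by
    have : μ 1 * (p * u + q * s) = 0 := by linear_combination s * hμ - p * hz
    exact (mul_eq_zero.1 this).resolve_right hdet.ne'
  intro i
  fin_cases i <;> simp [h0, h1, h2, h3]

theorem zero_mem_interior_convexHull_tetrahedronAroundZero :
    (0 : EuclideanSpace ℝ (Fin 3)) ∈
      interior (convexHull ℝ (range (tetrahedronAroundZero a b))) := by
  set α := b 0 / a 0 + b 2 / a 2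
  set β := b 1 / a 1 + b 3 / a 3
  have hα : 0 < α := add_pos (div_pos (hb 0) (ha 0)) (div_pos (hb 2) (ha 2))
  have hβ : 0 < β := add_pos (div_pos (hb 1) (ha 1)) (div_pos (hb 3) (ha 3))
  refine (affineIndependent_tetrahedronAroundZero ha hb).zero_mem_interior_convexHull
    (by simp) (w := ![β / a 0, α / a 1, β / a 2, α / a 3]) ?_ ?_
  · intro k
    fin_cases k <;> exact div_pos (by assumption) (ha _)
  · have := (ha 0).ne'; have := (ha 1).ne'; have := (ha 2).ne'; have := (ha 3).ne'
    ext l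
    fin_cases l <;> simp [Fin.sum_univ_four, tetrahedronAroundZero, α, β] <;> field_simp <;> ring

end tetrahedronAroundZero

/- For `i ≠ 0` this is the rational parametrisation `τ ↦ ((1 - τ²)/(1 + τ²), 2τ/(1 + τ²))` of the
unit circle at `τ = i - 2`, which misses only `(-1, 0)`, the value at `i = 0`. Indices `0, 1, 2, 3`
give the directions `-e₁, -e₂, e₁, e₂`. -/
noncomputable def circleX (i : ℕ) : ℝ :=
  if i = 0 then -1 else (1 - ((i : ℝ) - 2) ^ 2) / (1 + ((i : ℝ) - 2) ^ 2)

noncomputable def circleY (i : ℕ) : ℝ :=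
  if i = 0 then 0 else 2 * ((i : ℝ) - 2) / (1 + ((i : ℝ) - 2) ^ 2)

theorem circleX_sq_add_circleY_sq (i : ℕ) : circleX i ^ 2 + circleY i ^ 2 = 1 := by
  unfold circleX circleY
  split_ifs
  · norm_num
  · field_simp; ring

theorem one_add_circleX_pos {i : ℕ} (hi : i ≠ 0) : 0 < 1 + circleX i := by
  have : 1 + circleX i = 2 / (1 + ((i : ℝ) - 2) ^ 2) := by
    rw [circleX, if_neg hi]; field_simp; ring
  rw [this]; positivity

theorem circleY_div_one_add_circleX {i : ℕ} (hi : i ≠ 0) :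
    circleY i / (1 + circleX i) = i - 2 := by
  simp only [circleX, circleY, if_neg hi]
  field_simp
  ring

theorem eq_of_circleX_eq_of_circleY_eq {i j : ℕ} (hX : circleX i = circleX j)
    (hY : circleY i = circleY j) : i = j := by
  have hX0 : circleX 0 = -1 := if_pos rfl
  rcases eq_or_ne i 0 with rfl | hi <;> rcases eq_or_ne j 0 with rfl | hj
  · rfl
  · linarith [one_add_circleX_pos hj]
  · linarith [one_add_circleX_pos hi]
  · have := circleY_div_one_add_circleX hi
    rw [hX, hY, circleY_div_one_add_circleX hj] at this
    exact_mod_cast (sub_left_inj.1 this).symm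

noncomputable def ellipsoidPoint (a b h z : ℝ) (i : ℕ) : EuclideanSpace ℝ (Fin 3) :=
  !₂[a * h * circleX i, a * h * circleY i, (-1) ^ i * b * z]

theorem norm_ellipsoidPoint_sq (a b h z : ℝ) (i : ℕ) :
    ‖ellipsoidPoint a b h z i‖ ^ 2 = a ^ 2 * h ^ 2 + b ^ 2 * z ^ 2 := by
  have hsign : ((-1 : ℝ) ^ i) ^ 2 = 1 := by rw [← pow_mul', pow_mul, neg_one_sq, one_pow]
  rw [EuclideanSpace.norm_sq_eq, Fin.sum_univ_three]
  simp only [ellipsoidPoint, Real.norm_eq_abs, sq_abs, PiLp.toLp_apply, Matrix.cons_val_zero,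
    Matrix.cons_val_one, Matrix.cons_val_two, Matrix.tail_cons, Matrix.head_cons]
  linear_combination (a ^ 2 * h ^ 2) * circleX_sq_add_circleY_sq i + b ^ 2 * z ^ 2 * hsign

theorem toEuclideanLin_diagonal_ellipsoidPoint {a b : ℝ} (ha : a ≠ 0) (hb : b ≠ 0) (h z : ℝ)
    (i : ℕ) :
    Matrix.toEuclideanLin (Matrix.diagonal ![a⁻¹, a⁻¹, b⁻¹]) (ellipsoidPoint a b h z i) =
      ellipsoidPoint 1 1 h z i := by
  ext l
  fin_cases l <;> simp [ellipsoidPoint, Matrix.mulVec_diagonal] <;> field_simp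

theorem ellipsoidPoint_injective {n : ℕ} {h z : Fin n → ℝ} (hh : ∀ i, 0 < h i) :
    (fun i : Fin n => ellipsoidPoint 1 1 (h i) (z i) i).Injective := by
  intro i j hij
  have hX : h i * circleX i = h j * circleX j := by
    simpa [ellipsoidPoint] using congrArg (· 0) hij
  have hY : h i * circleY i = h j * circleY j := by
    simpa [ellipsoidPoint] using congrArg (· 1) hij
  have hhij : h i = h j := by
    have hsq : h i ^ 2 = h j ^ 2 := by
      linear_combination (h i * circleX i + h j * circleX j) * hX
        + (h i * circleY i + h j * circleY j) * hY
        - h i ^ 2 * circleX_sq_add_circleY_sq i + h j ^ 2 * circleX_sq_add_circleY_sq j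
    exact (sq_eq_sq₀ (hh i).le (hh j).le).1 hsq
  rw [hhij] at hX hY
  exact Fin.ext (eq_of_circleX_eq_of_circleY_eq (mul_left_cancel₀ (hh j).ne' hX)
    (mul_left_cancel₀ (hh j).ne' hY))

theorem tetrahedronAroundZero_eq_ellipsoidPoint {n : ℕ} (hn : 4 ≤ n) (a b : ℝ)
    (h z : Fin n → ℝ) :
    tetrahedronAroundZero (fun k => a * h (Fin.castLE hn k)) (fun k => b * z (Fin.castLE hn k)) =
      (fun i : Fin n => ellipsoidPoint a b (h i) (z i) i) ∘ Fin.castLE hn := by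
  funext k
  ext l
  fin_cases k <;> fin_cases l <;>
    simp [tetrahedronAroundZero, ellipsoidPoint, circleX, circleY] <;> norm_num

theorem exists_ellipsoid_coords {a b r : ℝ} (hb : 0 < b) (hbr : b < r) (hra : r < a) :
    ∃ h z : ℝ, 0 < h ∧ 0 < z ∧ h ^ 2 + z ^ 2 = 1 ∧ a ^ 2 * h ^ 2 + b ^ 2 * z ^ 2 = r ^ 2 := by
  have hab : 0 < a ^ 2 - b ^ 2 := by nlinarith
  have hh : 0 < (r ^ 2 - b ^ 2) / (a ^ 2 - b ^ 2) := div_pos (by nlinarith) hab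
  have hz : 0 < (a ^ 2 - r ^ 2) / (a ^ 2 - b ^ 2) := div_pos (by nlinarith) hab
  refine ⟨_, _, Real.sqrt_pos.2 hh, Real.sqrt_pos.2 hz, ?_, ?_⟩ <;>
    rw [Real.sq_sqrt hh.le, Real.sq_sqrt hz.le] <;> field_simp <;> ring

theorem exists_convexPosition_on_ellipsoid {n : ℕ} (hn : 4 ≤ n) {a b : ℝ} (hb : 0 < b)
    (r : Fin n → ℝ) (hbr : ∀ i, b < r i) (hra : ∀ i, r i < a) :
    ∃ P : Fin n → EuclideanSpace ℝ (Fin 3),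
      (∀ i, ‖P i‖ = r i) ∧
      (∀ i, P i ∉ convexHull ℝ (P '' {j | j ≠ i})) ∧
      (0 : EuclideanSpace ℝ (Fin 3)) ∈ interior (convexHull ℝ (range P)) := by
  have ha : 0 < a := by linarith [hbr ⟨0, by omega⟩, hra ⟨0, by omega⟩]
  choose h z hh hz hsphere hnorm using fun i => exists_ellipsoid_coords hb (hbr i) (hra i)
  set P := fun i : Fin n => ellipsoidPoint a b (h i) (z i) i
  set φ := Matrix.toEuclideanLin (Matrix.diagonal ![a⁻¹, a⁻¹, b⁻¹])
  have hφ (i : Fin n) : φ (P i) = ellipsoidPoint 1 1 (h i) (z i) i :=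
    toEuclideanLin_diagonal_ellipsoidPoint ha.ne' hb.ne' _ _ _
  refine ⟨P, fun i => ?_, fun i => ?_, ?_⟩
  · rw [← sq_eq_sq₀ (norm_nonneg _) (by linarith [hbr i]), norm_ellipsoidPoint_sq, hnorm]
  · refine notMem_convexHull_image_ne_of_norm_map_eq_one φ ?_ (fun i => ?_) i
    · convert ellipsoidPoint_injective (z := z) hh using 1
      exact funext hφ
    · rw [hφ, ← sq_eq_sq₀ (norm_nonneg _) zero_le_one, norm_ellipsoidPoint_sq]
      simpa using hsphere i
  · refine interior_mono (convexHull_mono ?_) (zero_mem_interior_convexHull_tetrahedronAroundZero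
      (fun k => mul_pos ha (hh (Fin.castLE hn k))) (fun k => mul_pos hb (hz (Fin.castLE hn k))))
    rw [tetrahedronAroundZero_eq_ellipsoidPoint hn]
    exact range_comp_subset_range _ _

theorem exists_convexPosition_of_pos {n : ℕ} (hn : 4 ≤ n) (r : Fin n → ℝ)
    (hr : ∀ i, 0 < r i) :
    ∃ P : Fin n → EuclideanSpace ℝ (Fin 3),
      (∀ i, ‖P i‖ = r i) ∧
      (∀ i, P i ∉ convexHull ℝ (P '' {j | j ≠ i})) ∧
      (0 : EuclideanSpace ℝ (Fin 3)) ∈ interior (convexHull ℝ (range P)) := by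
  have : Nonempty (Fin n) := ⟨⟨0, by omega⟩⟩
  obtain ⟨imin, himin⟩ := Finite.exists_min r
  obtain ⟨imax, himax⟩ := Finite.exists_max r
  exact exists_convexPosition_on_ellipsoid hn (a := r imax + 1) (half_pos (hr imin)) r
    (fun i => by linarith [hr imin, himin i]) (fun i => by linarith [himax i])

theorem stmt13 (n : ℕ) (hn : 4 ≤ n) (w : Fin n → ℝ)
    (hw : ∀ i, 0 ≤ w i ∧ w i < Real.pi / 2) :
    ∃ P : Fin n → EuclideanSpace ℝ (Fin 3),
      (∀ i, ‖P i‖ = 1 / Real.cos (w i)) ∧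
      (∀ i, P i ∉ convexHull ℝ (P '' {j | j ≠ i})) ∧
      (0 : EuclideanSpace ℝ (Fin 3)) ∈ interior (convexHull ℝ (Set.range P)) := by
  refine exists_convexPosition_of_pos hn _ fun i => one_div_pos.2 ?_
  exact Real.cos_pos_of_mem_Ioo ⟨by linarith [(hw i).1, Real.pi_pos], (hw i).2⟩
end
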